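/- The singularity relation on Fibonacci indexes is antisymmetric, hence a partial order: if u ≤ v and v ≤ u in the reflexive–transitive closure of the shifting, splitting and concatenation relations, then u = v. -/
import Mathlib


/-- The two-letter alphabet. -/
inductive Letter : Type
  | C : Letter
  | D : Letter
deriving DecidableEq, Repr

open Letter

/-- The block `D^i C^j` corresponding to a pair `(i, j)`. -/
def block (p : ℕ × ℕ) : List Letter :=
  List.replicate p.1 D ++ List.replicate p.2 C

/-- A Fibonacci index is a nonempty list `k : List (ℕ × ℕ)`; the word `(C,D)^k`
is `D^{i_0}C^{j_0} ++ [C,D] ++ … ++ [C,D] ++ D^{i_r}C^{j_r}`. -/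
def cdWord (k : List (ℕ × ℕ)) : List Letter :=
  List.intercalate [C, D] (k.map block)

/-- The degree `2·Σ i_n + Σ j_n + 3r` of a Fibonacci index of order `r + 1`. -/
def degree (k : List (ℕ × ℕ)) : ℕ :=
  2 * (k.map Prod.fst).sum + (k.map Prod.snd).sum + 3 * (k.length - 1)

/-- The generating relations of the singularity partial order: shifting,
splitting, and concatenation (`x`, `y` may be empty). -/
inductive SingStep : List (ℕ × ℕ) → List (ℕ × ℕ) → Prop
  | shift (a b c d : ℕ) : SingStep [(a, c), (b, d + 1)] [(a, c + 1), (b, d)]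
  | split (a b c : ℕ) : SingStep [(a + b + 1, c + 1)] [(a, 0), (b, c)]
  | concat (x y : List (ℕ × ℕ)) {u v : List (ℕ × ℕ)} :
      SingStep u v → SingStep (x ++ u ++ y) (x ++ v ++ y)

/-- The singularity partial order: reflexive–transitive closure of `SingStep`. -/
def SingLE (u v : List (ℕ × ℕ)) : Prop := Relation.ReflTransGen SingStep u v

def wt : List (ℕ × ℕ) → ℕ
  | [] => 0
  | p :: t => p.2 * (t.length + 1) + wt t

def sj (l : List (ℕ × ℕ)) : ℕ := (l.map Prod.snd).sum

lemma wt_append (x y : List (ℕ × ℕ)) :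
    wt (x ++ y) = wt x + sj x * y.length + wt y := by
  induction x with
  | nil => simp [wt, sj]
  | cons p t ih =>
    simp only [List.cons_append, wt, ih, List.length_append, sj, List.map_cons,
      List.sum_cons, List.append_eq]
    ring

lemma step_key {u v : List (ℕ × ℕ)} (h : SingStep u v) :
    u.length < v.length ∨ (u.length = v.length ∧ sj u = sj v ∧ wt u < wt v) := by
  induction h with
  | shift a b c d => right; simp [wt, sj]; omega
  | split a b c => left; simp
  | @concat x y u' v' h ih =>
    rcases ih with h1 | ⟨h1, h2, h3⟩
    · left; simp [List.length_append]; omega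
    · right
      refine ⟨by simp [List.length_append]; omega, ?_, ?_⟩
      · simp only [sj, List.map_append, List.sum_append] at h2 ⊢; omega
      
      rw [List.append_assoc, List.append_assoc, wt_append, wt_append,
        wt_append, wt_append, List.length_append, List.length_append]
      have h5 : sj u' * y.length = sj v' * y.length := by rw [h2]
      have h6 : sj x * (u'.length + y.length) = sj x * (v'.length + y.length) := by rw [h1]
      omega

lemma le_key {u v : List (ℕ × ℕ)} (h : SingLE u v) :
    u = v ∨ u.length < v.length ∨ (u.length = v.length ∧ wt u < wt v) := by
  induction h with
  | refl => left; rfl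
  | tail _ step ih =>
    rcases step_key step with h1 | ⟨h1, _, h3⟩ <;>
      rcases ih with rfl | h2 | ⟨h2, h4⟩ <;> right <;> omega


/-- The singularity relation is antisymmetric, hence a partial order. -/
theorem singLE_antisymm (u v : List (ℕ × ℕ)) (huv : SingLE u v)
    (hvu : SingLE v u) : u = v := by
  rcases le_key huv with rfl | h1 | ⟨h1, h2⟩
  · rfl
  all_goals rcases le_key hvu with rfl | h3 | ⟨h3, h4⟩ <;> omega
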